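/- For every n ≥ 0, the identity F_n(x,y) = Σ_{j=0}^{n} Σ_{m=0}^{j} S(n,j) · (x−1)^{n−j} · c(j,m) · y^m holds in ℤ[x,y], where S(n,j) are the Stirling numbers of the second kind and c(j,m) are the unsigned Stirling numbers of the first kind. -/

import Mathlib

open Equiv Equiv.Perm Finset MvPolynomial

/-- Number of excedances of a permutation. -/
def exc {n : ℕ} (π : Equiv.Perm (Fin n)) : ℕ :=
  (Finset.univ.filter fun i => i < π i).card

/-- Number of cycles of a permutation, counting fixed points as cycles. -/
def cyc {n : ℕ} (π : Equiv.Perm (Fin n)) : ℕ :=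
  Multiset.card π.cycleType + (Finset.univ.filter fun i => π i = i).card

/-- The Savage–Viswanathan polynomial `F_n(x,y) ∈ ℤ[x,y]`, with `x = X 0`, `y = X 1`. -/
noncomputable def SV (n : ℕ) : MvPolynomial (Fin 2) ℤ :=
  ∑ π : Equiv.Perm (Fin n), MvPolynomial.X 0 ^ exc π * MvPolynomial.X 1 ^ cyc π

/-- The Stirling number of the second kind `S(n,j)`: the number of partitions of an
`n`-element set into `j` nonempty blocks. -/
noncomputable def stirling2 (n j : ℕ) : ℕ :=
  Fintype.card {P : Finpartition (Finset.univ : Finset (Fin n)) // P.parts.card = j}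

/-- The unsigned Stirling number of the first kind `c(j,m)`: the number of permutations
of a `j`-element set with exactly `m` cycles (fixed points counting as cycles). -/
def stirling1 (j m : ℕ) : ℕ :=
  ((Finset.univ : Finset (Equiv.Perm (Fin j))).filter fun π => cyc π = m).card

section Part1

variable {α : Type*} [Fintype α] [DecidableEq α]

/-- cycle count including fixed points, generic version -/
def cycF (f : Perm α) : ℕ :=
  Multiset.card f.cycleType + (Fintype.card α - f.support.card)

lemma card_cycleType' (f : Perm α) : Multiset.card f.cycleType = f.cycleFactorsFinset.card := by
  simp [Equiv.Perm.cycleType]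

lemma disjoint_mul_inv_cycleOf (f : Perm α) (b : α) (hb : b ∈ f.support) :
    Equiv.Perm.Disjoint (f * (f.cycleOf b)⁻¹) (f.cycleOf b) := by
  intro x
  by_cases hx : x ∈ (f.cycleOf b).support
  · left
    have h1 : (f.cycleOf b)⁻¹ x ∈ (f.cycleOf b).support := by
      rw [← Equiv.Perm.support_inv (f.cycleOf b)] at hx
      rw [← Equiv.Perm.support_inv (f.cycleOf b)]
      exact Equiv.Perm.apply_mem_support.mpr hx
    have h2 : f.cycleOf b ((f.cycleOf b)⁻¹ x) = f ((f.cycleOf b)⁻¹ x) :=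
      (Equiv.Perm.mem_cycleFactorsFinset_iff.mp
          (Equiv.Perm.cycleOf_mem_cycleFactorsFinset_iff.mpr hb)).2 _ h1
    simp only [Equiv.Perm.mul_apply]
    rw [← h2]
    simp
  · right
    simpa using hx

lemma join_lemma (f : Perm α) (a b : α) (hfa : f a = a) (hab : a ≠ b) :
    cycF (Equiv.swap a b * f) + 1 = cycF f := by
  have ha : a ∉ f.support := by simp [hfa]
  have haN : f.support.card < Fintype.card α := by
    rw [← Finset.card_univ]
    exact Finset.card_lt_card (Finset.ssubset_univ_iff.mpr (fun h => ha (h ▸ Finset.mem_univ a)))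
  by_cases hb : b ∈ f.support
  · -- b in a nontrivial cycle
    set c := f.cycleOf b with hc
    have hcmem : c ∈ f.cycleFactorsFinset := cycleOf_mem_cycleFactorsFinset_iff.mpr hb
    have hccyc : c.IsCycle := (Equiv.Perm.mem_cycleFactorsFinset_iff.mp hcmem).1
    set g := f * c⁻¹ with hg
    have hdisj : g.Disjoint c := disjoint_mul_inv_cycleOf f b hb
    have hgc : g * c = f := by simp [hg]
    have hsuppsub : c.support ⊆ f.support := Equiv.Perm.support_cycleOf_le f b
    have hsuppg : g.support ⊆ f.support := by
      intro x hx
      have h := Equiv.Perm.support_mul_le f c⁻¹ hx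
      simp only [Finset.sup_eq_union, Finset.mem_union, Equiv.Perm.support_inv] at h
      exact h.elim id (fun h' => hsuppsub h')
    -- toList facts, packaged
    obtain ⟨l', hlen, hnd, hform, hal⟩ :
        ∃ l', 2 ≤ (b :: l').length ∧ (b :: l').Nodup ∧ (b :: l').formPerm = c ∧
          a ∉ (b :: l') := by
      have hlen : 2 ≤ (f.toList b).length :=
        (Equiv.Perm.two_le_length_toList_iff_mem_support).mpr hb
      have hnd : (f.toList b).Nodup := Equiv.Perm.nodup_toList f b
      have hform : (f.toList b).formPerm = c := Equiv.Perm.formPerm_toList f b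
      have hal : a ∉ f.toList b := by
        intro hmem
        rw [Equiv.Perm.mem_toList_iff] at hmem
        exact ha (hmem.1.mem_support_iff.mp hb)
      obtain ⟨b', l', hL⟩ := List.exists_cons_of_ne_nil
        (List.ne_nil_of_length_pos (by omega) : f.toList b ≠ [])
      have hb' : b' = b := by
        have h0 := Equiv.Perm.toList_getElem_zero (p := f) (x := b) hb
        have h2 : (f.toList b)[0]? = some b := by
          rw [List.getElem?_eq_getElem (by omega : 0 < (f.toList b).length)]
          simpa [List.get_eq_getElem] using congrArg some h0
        rw [hL] at h2
        simpa using h2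
      rw [hL, hb'] at hlen hnd hform hal
      exact ⟨l', hlen, hnd, hform, hal⟩
    -- c' := swap a b * c
    have hform' : (a :: b :: l').formPerm = Equiv.swap a b * c := by
      rw [List.formPerm_cons_cons, hform]
    have hnd' : (a :: b :: l').Nodup := List.nodup_cons.mpr ⟨hal, hnd⟩
    have hcyc' : (Equiv.swap a b * c).IsCycle := by
      rw [← hform']
      exact List.isCycle_formPerm hnd' (by simp)
    have hsuppc : c.support = (b :: l').toFinset := by
      rw [← hform]
      exact (List.support_formPerm_of_nodup _ hnd (by
        intro x hx
        rw [hx] at hlen; simp at hlen))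
    have hsupp' : (Equiv.swap a b * c).support = insert a c.support := by
      rw [← hform', List.support_formPerm_of_nodup _ hnd' (by
        intro x hx
        simp at hx), hsuppc]
      simp
    have hac : a ∉ c.support := fun h => ha (hsuppsub h)
    have hag : a ∉ g.support := fun h => ha (hsuppg h)
    -- split
    have hsplit : Equiv.swap a b * f = (Equiv.swap a b * c) * g := by
      rw [← hgc, (hdisj.commute).eq, mul_assoc]
    have hdisj' : (Equiv.swap a b * c).Disjoint g := by
      rw [Equiv.Perm.disjoint_iff_disjoint_support, hsupp']
      rw [Finset.disjoint_insert_left]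
      exact ⟨hag, (Equiv.Perm.disjoint_iff_disjoint_support.mp hdisj.symm)⟩
    have hct : (Equiv.swap a b * f).cycleType = (Equiv.swap a b * c).cycleType + g.cycleType := by
      rw [hsplit]; exact hdisj'.cycleType_mul
    have hctf : f.cycleType = g.cycleType + c.cycleType := by
      rw [← hgc]; exact hdisj.cycleType_mul
    have hsupf : f.support = g.support ∪ c.support := by
      rw [← hgc]; exact hdisj.support_mul
    have hcardf : f.support.card = g.support.card + c.support.card := by
      rw [hsupf]
      exact Finset.card_union_of_disjoint (Equiv.Perm.disjoint_iff_disjoint_support.mp hdisj)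
    have hsupp'' : (Equiv.swap a b * f).support = insert a f.support := by
      rw [hsplit, hdisj'.support_mul, hsupp', hsupf]
      ext x; simp [or_comm, or_left_comm, or_assoc]
    have hcard'' : (Equiv.swap a b * f).support.card = f.support.card + 1 := by
      rw [hsupp'', Finset.card_insert_of_notMem ha]
    have hcc' : (Equiv.swap a b * c).cycleType = {c.support.card + 1} := by
      rw [hcyc'.cycleType, hsupp', Finset.card_insert_of_notMem hac]
    have hcc : c.cycleType = {c.support.card} := by rw [hccyc.cycleType]
    unfold cycF
    rw [hct, hcc', hcard'']
    have hcf : Multiset.card f.cycleType = Multiset.card g.cycleType + 1 := by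
      rw [hctf, hcc, Multiset.card_add]; rfl
    rw [hcf, Multiset.card_add]
    simp only [Multiset.card_singleton]
    omega
  · -- b is a fixed point: swap a b disjoint from f
    have hfb : f b = b := by simpa using hb
    have hd : (Equiv.swap a b).Disjoint f := by
      intro x
      by_cases hx : x = a
      · right; rw [hx]; exact hfa
      · by_cases hy : x = b
        · right; rw [hy]; exact hfb
        · left; exact Equiv.swap_apply_of_ne_of_ne hx hy
    have h1 : (Equiv.swap a b * f).cycleType = (Equiv.swap a b).cycleType + f.cycleType :=
      hd.cycleType_mul
    have h2 : (Equiv.swap a b * f).support = {a, b} ∪ f.support := by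
      rw [hd.support_mul, Equiv.Perm.support_swap hab]
    have hsc : (Equiv.swap a b).cycleType = {2} := by
      rw [(Equiv.Perm.isCycle_swap hab).cycleType, Equiv.Perm.support_swap hab]
      rw [Finset.card_insert_of_notMem (by simpa using hab), Finset.card_singleton]
    have hcard2 : ({a, b} ∪ f.support).card = f.support.card + 2 := by
      rw [Finset.card_union_of_disjoint (by
        simp only [Finset.disjoint_left, Finset.mem_insert, Finset.mem_singleton]
        rintro x (rfl | rfl) <;> assumption)]
      rw [Finset.card_insert_of_notMem (by simpa using hab), Finset.card_singleton]
      omega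
    have hle : f.support.card + 2 ≤ Fintype.card α := by
      have hsub : {a, b} ∪ f.support ⊆ Finset.univ := Finset.subset_univ _
      have := Finset.card_le_card hsub
      rw [hcard2] at this
      simpa [Finset.card_univ] using this
    unfold cycF
    rw [h1, h2, hsc, hcard2, Multiset.card_add]
    simp only [Multiset.card_singleton]
    omega

end Part1

section Part2

lemma cyc_eq_cycF {n : ℕ} (π : Perm (Fin n)) : cyc π = cycF π := by
  unfold cyc cycF
  congr 1
  have h := Finset.card_filter_add_card_filter_not
    (s := (univ : Finset (Fin n))) (p := fun i => π i = i)
  have hsupp : π.support = univ.filter (fun i => ¬ π i = i) := rfl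
  rw [Fintype.card_fin] at *
  rw [← hsupp] at h
  rw [Finset.card_univ, Fintype.card_fin] at h
  omega

lemma supp_card_le {n : ℕ} (π : Perm (Fin n)) : π.support.card ≤ n := by
  simpa using Finset.card_le_card (Finset.subset_univ π.support)

/-- the extension of a permutation of `Fin n` to `Fin (n+1)` fixing `0` -/
noncomputable def ext0 {n : ℕ} (e : Perm (Fin n)) : Perm (Fin (n + 1)) :=
  Equiv.Perm.decomposeFin.symm (0, e)

lemma ext0_zero {n : ℕ} (e : Perm (Fin n)) : ext0 e 0 = 0 := by
  simp [ext0]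

lemma ext0_succ {n : ℕ} (e : Perm (Fin n)) (x : Fin n) : ext0 e x.succ = (e x).succ := by
  simp [ext0]

lemma decomposeFin_eq {n : ℕ} (p : Fin (n + 1)) (e : Perm (Fin n)) :
    Equiv.Perm.decomposeFin.symm (p, e) = Equiv.swap 0 p * ext0 e := by
  ext x
  refine Fin.cases ?_ (fun i => ?_) x
  · simp [ext0_zero]
  · simp [ext0_succ]

def succEquiv (n : ℕ) : Fin n ≃ {x : Fin (n + 1) // x ≠ 0} where
  toFun i := ⟨i.succ, Fin.succ_ne_zero i⟩
  invFun x := (x.1).pred x.2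
  left_inv i := by simp
  right_inv x := by simp

lemma ext0_eq_extendDomain {n : ℕ} (e : Perm (Fin n)) :
    ext0 e = e.extendDomain (succEquiv n) := by
  ext x
  refine Fin.cases ?_ (fun i => ?_) x
  · rw [ext0_zero, Equiv.Perm.extendDomain_apply_not_subtype _ _ (by simp)]
  · rw [ext0_succ]
    have : (i.succ : Fin (n+1)) = ((succEquiv n) i : Fin (n+1)) := rfl
    rw [this, Equiv.Perm.extendDomain_apply_image]
    rfl

lemma cycleType_ext0 {n : ℕ} (e : Perm (Fin n)) : (ext0 e).cycleType = e.cycleType := by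
  rw [ext0_eq_extendDomain]
  exact Equiv.Perm.cycleType_extendDomain _

lemma supp_ext0 {n : ℕ} (e : Perm (Fin n)) : (ext0 e).support.card = e.support.card := by
  rw [← Equiv.Perm.sum_cycleType, ← Equiv.Perm.sum_cycleType, cycleType_ext0]

lemma cycF_ext0 {n : ℕ} (e : Perm (Fin n)) : cycF (ext0 e) = cycF e + 1 := by
  unfold cycF
  rw [cycleType_ext0, supp_ext0, Fintype.card_fin, Fintype.card_fin]
  have := supp_card_le e
  omega

lemma exc_card {n : ℕ} (π : Perm (Fin n)) :
    exc π = ∑ i : Fin n, if i < π i then 1 else 0 := by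
  unfold exc
  rw [Finset.card_filter]

lemma exc_ext0 {n : ℕ} (e : Perm (Fin n)) : exc (ext0 e) = exc e := by
  rw [exc_card, exc_card, Fin.sum_univ_succ, ext0_zero]
  simp only [lt_irrefl, if_false, zero_add]
  apply Finset.sum_congr rfl
  intro x _
  rw [ext0_succ]
  simp [Fin.succ_lt_succ_iff]

lemma exc_le {n : ℕ} (e : Perm (Fin n)) : exc e ≤ n := by
  unfold exc
  exact (Finset.card_filter_le _ _).trans (by simp)

lemma exc_q {n : ℕ} (e : Perm (Fin n)) (q : Fin n) :
    exc (Equiv.Perm.decomposeFin.symm (q.succ, e)) =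
      if e⁻¹ q < q then exc e else exc e + 1 := by
  have key : exc (Equiv.Perm.decomposeFin.symm (q.succ, e)) =
      1 + (univ.filter fun x => x < e x ∧ e x ≠ q).card := by
    rw [exc_card, Fin.sum_univ_succ]
    rw [Equiv.Perm.decomposeFin_symm_apply_zero]
    simp only [Fin.lt_iff_val_lt_val, Fin.val_zero, Fin.val_succ]
    rw [if_pos (Nat.succ_pos _)]
    congr 1
    rw [Finset.card_filter]
    apply Finset.sum_congr rfl
    intro x _
    rw [Equiv.Perm.decomposeFin_symm_apply_succ]
    by_cases hx : e x = q
    · rw [hx, Equiv.swap_apply_right]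
      simp [hx]
    · rw [Equiv.swap_apply_of_ne_of_ne (Fin.succ_ne_zero _) (by
        simpa [Fin.succ_inj] using hx)]
      simp [Fin.succ_lt_succ_iff, hx]
  rw [key]
  have hsplit : (univ.filter fun x => x < e x) =
      (univ.filter fun x => x < e x ∧ e x ≠ q) ∪
      (univ.filter fun x => x < e x ∧ e x = q) := by
    rw [← Finset.filter_or]
    apply Finset.filter_congr
    intro x _
    by_cases h : e x = q <;> simp [h]
  have hdisj : Disjoint (univ.filter fun x => x < e x ∧ e x ≠ q)
      (univ.filter fun x => x < e x ∧ e x = q) := by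
    simp only [Finset.disjoint_left, Finset.mem_filter]
    rintro x ⟨_, _, hne⟩ ⟨_, _, heq⟩
    exact hne heq
  have hcard : exc e = (univ.filter fun x => x < e x ∧ e x ≠ q).card +
      (univ.filter fun x => x < e x ∧ e x = q).card := by
    unfold exc
    rw [hsplit, Finset.card_union_of_disjoint hdisj]
  have hsingle : (univ.filter fun x => x < e x ∧ e x = q).card =
      if e⁻¹ q < q then 1 else 0 := by
    by_cases h : e⁻¹ q < q
    · rw [if_pos h]
      rw [Finset.card_eq_one]
      refine ⟨e⁻¹ q, ?_⟩
      ext x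
      simp only [Finset.mem_filter, Finset.mem_univ, true_and, Finset.mem_singleton]
      constructor
      · rintro ⟨hlt, heq⟩
        rw [← heq]; simp
      · rintro rfl
        simpa using h
    · rw [if_neg h]
      rw [Finset.card_eq_zero]
      rw [Finset.filter_eq_empty_iff]
      rintro x _ ⟨hlt, heq⟩
      apply h
      have hx : e⁻¹ q = x := by rw [← heq]; simp
      rw [hx, ← heq]
      exact hlt
  rw [hsingle] at hcard
  by_cases h : e⁻¹ q < q
  · rw [if_pos h]; rw [if_pos h] at hcard; omega
  · rw [if_neg h]; rw [if_neg h] at hcard; omega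

lemma cyc_q {n : ℕ} (e : Perm (Fin n)) (q : Fin n) :
    cyc (Equiv.Perm.decomposeFin.symm (q.succ, e)) = cyc e := by
  rw [cyc_eq_cycF, cyc_eq_cycF, decomposeFin_eq]
  have h := join_lemma (ext0 e) 0 q.succ (ext0_zero e) (Fin.succ_ne_zero q).symm
  rw [cycF_ext0] at h
  omega

lemma cyc_zero_case {n : ℕ} (e : Perm (Fin n)) :
    cyc (Equiv.Perm.decomposeFin.symm (0, e)) = cyc e + 1 := by
  rw [cyc_eq_cycF, cyc_eq_cycF]
  exact cycF_ext0 e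

lemma pd_term (k m : ℕ) :
    pderiv (0 : Fin 2) ((X 0 : MvPolynomial (Fin 2) ℤ) ^ k * X 1 ^ m) =
      (k • X 0 ^ (k - 1)) * X 1 ^ m := by
  rw [pderiv_mul, pderiv_pow, pderiv_pow, pderiv_X_self, pderiv_X_of_ne (by decide)]
  push_cast
  ring

lemma ring_identity {R : Type*} [CommRing R] (x y : R) (k n m : ℕ) (hk : k ≤ n) :
    x ^ k * y ^ (m + 1) + (k • x ^ k + (n - k) • x ^ (k + 1)) * y ^ m =
      y * (x ^ k * y ^ m) + n • (x * (x ^ k * y ^ m)) +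
        (x - x ^ 2) * ((k • x ^ (k - 1)) * y ^ m) := by
  simp only [nsmul_eq_mul]
  rw [Nat.cast_sub hk]
  cases k with
  | zero => push_cast; ring
  | succ k => push_cast; ring

/-- The fundamental recurrence for SV. -/
theorem SV_rec (n : ℕ) :
    SV (n + 1) = X 1 * SV n + n • (X 0 * SV n) +
      (X 0 - X 0 ^ 2) * (pderiv 0 (SV n)) := by
  have hD : (pderiv 0 (SV n) : MvPolynomial (Fin 2) ℤ) =
      ∑ e : Perm (Fin n), (exc e • X 0 ^ (exc e - 1)) * X 1 ^ cyc e := by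
    unfold SV
    rw [map_sum]
    exact Finset.sum_congr rfl fun e _ => pd_term _ _
  have hL : SV (n + 1) = ∑ e : Perm (Fin n),
      (X 0 ^ exc e * X 1 ^ (cyc e + 1) +
        (exc e • X 0 ^ exc e + (n - exc e) • X 0 ^ (exc e + 1)) * X 1 ^ cyc e) := by
    unfold SV
    rw [show (Finset.univ : Finset (Perm (Fin (n+1)))) =
      (Finset.univ : Finset (Fin (n+1) × Perm (Fin n))).map
        Equiv.Perm.decomposeFin.symm.toEmbedding from Finset.univ_perm_fin_succ]
    rw [Finset.sum_map]
    simp only [Equiv.coe_toEmbedding]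
    rw [Fintype.sum_prod_type]
    rw [Fin.sum_univ_succ]
    rw [Finset.sum_comm (γ := Fin n)]
    rw [← Finset.sum_add_distrib]
    apply Finset.sum_congr rfl
    intro e _
    apply congrArg₂ (· + ·)
    · have h1 : exc (Equiv.Perm.decomposeFin.symm ((0 : Fin (n+1)), e)) = exc e := exc_ext0 e
      rw [h1, cyc_zero_case]
    · have step1 : ∀ q : Fin n,
          (X 0 : MvPolynomial (Fin 2) ℤ) ^ exc (Equiv.Perm.decomposeFin.symm (q.succ, e)) *
            X 1 ^ cyc (Equiv.Perm.decomposeFin.symm (q.succ, e)) =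
          (if e⁻¹ q < q then X 0 ^ exc e else X 0 ^ (exc e + 1)) * X 1 ^ cyc e := by
        intro q
        rw [exc_q, cyc_q]
        by_cases h : e⁻¹ q < q <;> simp [h]
      rw [Finset.sum_congr rfl (fun q _ => step1 q)]
      rw [← Equiv.sum_comp e (fun q =>
        (if e⁻¹ q < q then (X 0 : MvPolynomial (Fin 2) ℤ) ^ exc e else X 0 ^ (exc e + 1)) *
          X 1 ^ cyc e)]
      simp only [Equiv.Perm.inv_def, Equiv.symm_apply_apply]
      rw [← Finset.sum_mul]
      rw [Finset.sum_ite (fun w => (X 0 : MvPolynomial (Fin 2) ℤ) ^ exc e)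
        (fun w => (X 0 : MvPolynomial (Fin 2) ℤ) ^ (exc e + 1))]
      rw [Finset.sum_const, Finset.sum_const]
      have hcard1 : (Finset.univ.filter fun w : Fin n => w < e w).card = exc e := rfl
      have hcard2 : (Finset.univ.filter fun w : Fin n => ¬ w < e w).card = n - exc e := by
        have h := Finset.card_filter_add_card_filter_not
          (s := (Finset.univ : Finset (Fin n))) (p := fun w => w < e w)
        rw [Finset.card_univ, Fintype.card_fin] at h
        unfold exc
        omega
      rw [hcard1, hcard2]
  rw [hL, hD]
  unfold SV
  simp only [Finset.mul_sum, Finset.smul_sum, ← Finset.sum_add_distrib]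
  apply Finset.sum_congr rfl
  intro e _
  exact ring_identity (X 0) (X 1) (exc e) n (cyc e) (exc_le e)

end Part2

section Part3

lemma fp_ext {α : Type*} [Lattice α] [OrderBot α] {a : α} {P Q : Finpartition a}
    (h : P.parts = Q.parts) : P = Q := by
  cases P; cases Q; simp only at h; subst h; rfl

variable {n : ℕ}

/-- pull a subset of `Fin (n+1)` down to `Fin n` (forgetting `last`) -/
def dn (s : Finset (Fin (n + 1))) : Finset (Fin n) :=
  Finset.univ.filter fun i => i.castSucc ∈ s

/-- push a subset of `Fin n` up to `Fin (n+1)` -/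
def up (t : Finset (Fin n)) : Finset (Fin (n + 1)) :=
  t.image Fin.castSucc

@[simp] lemma mem_dn {s : Finset (Fin (n + 1))} {i : Fin n} :
    i ∈ dn s ↔ i.castSucc ∈ s := by simp [dn]

@[simp] lemma mem_up {t : Finset (Fin n)} {x : Fin (n + 1)} :
    x ∈ up t ↔ ∃ i ∈ t, Fin.castSucc i = x := by simp [up]

lemma castSucc_mem_up {t : Finset (Fin n)} {i : Fin n} :
    i.castSucc ∈ up t ↔ i ∈ t := by
  simp only [mem_up]
  constructor
  · rintro ⟨j, hj, hji⟩
    rwa [← Fin.castSucc_injective n hji]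
  · exact fun h => ⟨i, h, rfl⟩

lemma last_not_mem_up {t : Finset (Fin n)} : Fin.last n ∉ up t := by
  simp only [mem_up]
  rintro ⟨i, _, hi⟩
  exact absurd hi (Fin.castSucc_lt_last i).ne

lemma dn_up (t : Finset (Fin n)) : dn (up t) = t := by
  ext i; rw [mem_dn, castSucc_mem_up]

lemma up_dn (s : Finset (Fin (n + 1))) : up (dn s) = s.erase (Fin.last n) := by
  ext x
  refine Fin.lastCases ?_ (fun i => ?_) x
  · exact iff_of_false last_not_mem_up (by simp)
  · rw [castSucc_mem_up, mem_dn, Finset.mem_erase]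
    simp [(Fin.castSucc_lt_last i).ne]

lemma dn_eq_empty_iff {s : Finset (Fin (n + 1))} : dn s = ∅ ↔ s ⊆ {Fin.last n} := by
  constructor
  · intro h x hx
    refine Fin.lastCases ?_ (fun i hi => ?_) x hx
    · simp
    · exfalso
      have : i ∈ dn s := mem_dn.mpr hi
      rw [h] at this
      exact absurd this (Finset.notMem_empty i)
  · intro h
    rw [Finset.eq_empty_iff_forall_notMem]
    intro i hi
    have := h (mem_dn.mp hi)
    rw [Finset.mem_singleton] at this
    exact absurd this (Fin.castSucc_lt_last i).ne

lemma up_injective : Function.Injective (up (n := n)) := fun a b h => by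
  have h2 := congrArg dn h
  rwa [dn_up, dn_up] at h2

lemma dn_disjoint {s t : Finset (Fin (n + 1))} (h : Disjoint s t) :
    Disjoint (dn s) (dn t) := by
  rw [Finset.disjoint_left] at h ⊢
  intro i hi hit
  exact h (mem_dn.mp hi) (mem_dn.mp hit)

lemma up_disjoint {s t : Finset (Fin n)} (h : Disjoint s t) :
    Disjoint (up s) (up t) := by
  rw [Finset.disjoint_left] at h ⊢
  rintro x hx hxt
  obtain ⟨i, hi, rfl⟩ := mem_up.mp hx
  exact h hi (castSucc_mem_up.mp hxt)

/-- push a partition of `Fin (n+1)` down to `Fin n` -/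
noncomputable def pdown (P : Finpartition (Finset.univ : Finset (Fin (n + 1)))) :
    Finpartition (Finset.univ : Finset (Fin n)) :=
  Finpartition.ofErase (P.parts.image dn)
    (by
      rw [Finset.supIndep_iff_pairwiseDisjoint]
      intro x hx y hy hxy
      simp only [Finset.coe_image, Set.mem_image, Finset.mem_coe] at hx hy
      obtain ⟨B, hB, rfl⟩ := hx
      obtain ⟨C, hC, rfl⟩ := hy
      have hBC : B ≠ C := fun h => hxy (by rw [h])
      exact dn_disjoint (P.disjoint hB hC hBC))
    (by
      apply Finset.Subset.antisymm
      · intro x _; exact Finset.mem_univ x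
      · intro i _
        rw [Finset.mem_sup]
        have hx : (i.castSucc : Fin (n+1)) ∈ P.parts.sup id := by
          rw [P.sup_parts]; exact Finset.mem_univ _
        rw [Finset.mem_sup] at hx
        obtain ⟨B, hB, hiB⟩ := hx
        exact ⟨dn B, Finset.mem_image_of_mem dn hB, mem_dn.mpr hiB⟩)

lemma pdown_parts (P : Finpartition (Finset.univ : Finset (Fin (n + 1)))) :
    (pdown P).parts = (P.parts.image dn).erase ∅ := rfl

/-- push a partition of `Fin n` up to `Fin (n+1)`, placing `last` into the
image of `C` (a new singleton block if `C = ∅`). -/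
def pup (P : Finpartition (Finset.univ : Finset (Fin n))) (C : Finset (Fin n))
    (hC : C = ∅ ∨ C ∈ P.parts) : Finpartition (Finset.univ : Finset (Fin (n + 1))) where
  parts := insert (insert (Fin.last n) (up C)) ((P.parts.erase C).image up)
  supIndep := by
    rw [Finset.supIndep_iff_pairwiseDisjoint]
    intro x hx y hy hxy
    simp only [Finset.coe_insert, Set.mem_insert_iff, Finset.coe_image, Set.mem_image,
      Finset.mem_coe, Finset.mem_erase] at hx hy
    have key : ∀ D : Finset (Fin n), D ≠ C → D ∈ P.parts →
        Disjoint (insert (Fin.last n) (up C)) (up D) := by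
      intro D hDC hD
      rw [Finset.disjoint_insert_left]
      refine ⟨last_not_mem_up, ?_⟩
      rcases hC with rfl | hCmem
      · simp [up]
      · exact up_disjoint (P.disjoint hCmem hD (fun h => hDC h.symm))
    rcases hx with rfl | ⟨B, ⟨hBC, hB⟩, rfl⟩
    · rcases hy with rfl | ⟨D, ⟨hDC, hD⟩, rfl⟩
      · exact absurd rfl hxy
      · exact key D hDC hD
    · rcases hy with rfl | ⟨D, ⟨hDC, hD⟩, rfl⟩
      · exact (key B hBC hB).symm
      · have hBD : B ≠ D := fun h => hxy (by rw [h])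
        exact up_disjoint (P.disjoint hB hD hBD)
  sup_parts := by
    apply Finset.Subset.antisymm
    · intro x _; exact Finset.mem_univ x
    · intro x _
      rw [Finset.mem_sup]
      refine Fin.lastCases ?_ (fun i => ?_) x
      · exact ⟨insert (Fin.last n) (up C), Finset.mem_insert_self _ _,
          Finset.mem_insert_self _ _⟩
      · have hx : i ∈ P.parts.sup id := by
          rw [P.sup_parts]; exact Finset.mem_univ _
        rw [Finset.mem_sup] at hx
        obtain ⟨D, hD, hiD⟩ := hx
        by_cases hDC : D = C
        · exact ⟨insert (Fin.last n) (up C), Finset.mem_insert_self _ _,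
            Finset.mem_insert_of_mem (castSucc_mem_up.mpr (hDC ▸ hiD))⟩
        · exact ⟨up D, Finset.mem_insert_of_mem
            (Finset.mem_image_of_mem up (Finset.mem_erase.mpr ⟨hDC, hD⟩)),
            castSucc_mem_up.mpr hiD⟩
  bot_notMem := by
    simp only [Finset.bot_eq_empty, Finset.mem_insert, Finset.mem_image, Finset.mem_erase]
    rintro (h | ⟨D, ⟨hDC, hD⟩, hupD⟩)
    · exact absurd h.symm (Finset.insert_ne_empty _ _)
    · obtain ⟨i, hi⟩ := P.nonempty_of_mem_parts hD
      have : i.castSucc ∈ up D := castSucc_mem_up.mpr hi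
      rw [hupD] at this
      exact absurd this (Finset.notMem_empty _)

lemma pup_parts (P : Finpartition (Finset.univ : Finset (Fin n))) (C : Finset (Fin n))
    (hC : C = ∅ ∨ C ∈ P.parts) :
    (pup P C hC).parts =
      insert (insert (Fin.last n) (up C)) ((P.parts.erase C).image up) := rfl

lemma pup_congr (P : Finpartition (Finset.univ : Finset (Fin n))) {C C' : Finset (Fin n)}
    (hC : C = ∅ ∨ C ∈ P.parts) (hC' : C' = ∅ ∨ C' ∈ P.parts) (h : C = C') :
    pup P C hC = pup P C' hC' := by
  subst h; rfl

lemma pup_part_last (P : Finpartition (Finset.univ : Finset (Fin n))) (C : Finset (Fin n))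
    (hC : C = ∅ ∨ C ∈ P.parts) :
    (pup P C hC).part (Fin.last n) = insert (Fin.last n) (up C) :=
  ((pup P C hC).eq_of_mem_parts
    ((pup P C hC).part_mem.2 (Finset.mem_univ _))
    (by rw [pup_parts]; exact Finset.mem_insert_self _ _)
    ((pup P C hC).mem_part (Finset.mem_univ _))
    (Finset.mem_insert_self _ _))

lemma pup_card (P : Finpartition (Finset.univ : Finset (Fin n))) (C : Finset (Fin n))
    (hC : C = ∅ ∨ C ∈ P.parts) :
    (pup P C hC).parts.card = P.parts.card + (if C = ∅ then 1 else 0) := by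
  rw [pup_parts]
  rw [Finset.card_insert_of_notMem (by
    simp only [Finset.mem_image]
    rintro ⟨D, _, hD⟩
    have : Fin.last n ∈ up D := by rw [hD]; exact Finset.mem_insert_self _ _
    exact last_not_mem_up this)]
  rw [Finset.card_image_of_injective _ up_injective]
  have hbot : (∅ : Finset (Fin n)) ∉ P.parts := by simpa using P.bot_notMem
  rcases hC with rfl | hCmem
  · rw [if_pos rfl, Finset.erase_eq_of_notMem hbot]
  · rw [if_neg (fun h : C = ∅ => hbot (h ▸ hCmem)), Finset.card_erase_of_mem hCmem]
    have : 1 ≤ P.parts.card := Finset.card_pos.mpr ⟨C, hCmem⟩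
    omega

lemma dn_insert_last (C : Finset (Fin n)) : dn (insert (Fin.last n) (up C)) = C := by
  ext i
  rw [mem_dn, Finset.mem_insert]
  constructor
  · rintro (h | h)
    · exact absurd h (Fin.castSucc_lt_last i).ne
    · exact castSucc_mem_up.mp h
  · intro h; exact Or.inr (castSucc_mem_up.mpr h)

lemma pdown_pup (P : Finpartition (Finset.univ : Finset (Fin n))) (C : Finset (Fin n))
    (hC : C = ∅ ∨ C ∈ P.parts) : pdown (pup P C hC) = P := by
  apply fp_ext
  rw [pdown_parts, pup_parts]
  rw [Finset.image_insert, dn_insert_last]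
  rw [Finset.image_image]
  have himg : ((P.parts.erase C).image fun D => dn (up D)) = P.parts.erase C := by
    apply Finset.image_congr (g := id) (fun D _ => dn_up D) |>.trans (Finset.image_id)
  rw [show ((fun s => dn s) ∘ up) = (fun D => dn (up D)) from rfl, himg]
  have hbot : (∅ : Finset (Fin n)) ∉ P.parts := by simpa using P.bot_notMem
  rcases hC with rfl | hCmem
  · rw [Finset.erase_eq_of_notMem hbot]
    rw [Finset.erase_insert hbot]
  · rw [Finset.insert_erase hCmem]
    rw [Finset.erase_eq_of_notMem hbot]

lemma dn_singleton_last : dn ({Fin.last n} : Finset (Fin (n + 1))) = ∅ :=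
  dn_eq_empty_iff.mpr (Finset.Subset.refl _)

lemma part_last_eq_singleton_iff (P : Finpartition (Finset.univ : Finset (Fin (n + 1)))) :
    dn (P.part (Fin.last n)) = ∅ ↔ P.part (Fin.last n) = {Fin.last n} := by
  rw [dn_eq_empty_iff]
  constructor
  · intro h
    exact Finset.Subset.antisymm h
      (Finset.singleton_subset_iff.mpr (P.mem_part (Finset.mem_univ _)))
  · intro h; rw [h]

lemma hvalid (P : Finpartition (Finset.univ : Finset (Fin (n + 1)))) :
    dn (P.part (Fin.last n)) = ∅ ∨ dn (P.part (Fin.last n)) ∈ (pdown P).parts := by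
  by_cases h0 : dn (P.part (Fin.last n)) = ∅
  · exact Or.inl h0
  · refine Or.inr ?_
    rw [pdown_parts, Finset.mem_erase]
    exact ⟨h0, Finset.mem_image_of_mem dn (P.part_mem.2 (Finset.mem_univ _))⟩

lemma last_not_mem_of_ne_partlast (P : Finpartition (Finset.univ : Finset (Fin (n + 1))))
    {B : Finset (Fin (n + 1))} (hB : B ∈ P.parts) (hne : B ≠ P.part (Fin.last n)) :
    Fin.last n ∉ B := fun h =>
  hne (P.eq_of_mem_parts hB (P.part_mem.2 (Finset.mem_univ _)) h (P.mem_part (Finset.mem_univ _)))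

lemma up_dn_part (P : Finpartition (Finset.univ : Finset (Fin (n + 1))))
    {B : Finset (Fin (n + 1))} (hB : B ∈ P.parts) (hne : B ≠ P.part (Fin.last n)) :
    up (dn B) = B := by
  rw [up_dn, Finset.erase_eq_of_notMem (last_not_mem_of_ne_partlast P hB hne)]

lemma dn_ne_empty_of_ne (P : Finpartition (Finset.univ : Finset (Fin (n + 1))))
    {B : Finset (Fin (n + 1))} (hB : B ∈ P.parts) (hne : B ≠ P.part (Fin.last n)) :
    dn B ≠ ∅ := by
  intro h
  obtain ⟨x, hx⟩ := P.nonempty_of_mem_parts hB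
  have hxl : x ≠ Fin.last n := by
    rintro rfl
    exact last_not_mem_of_ne_partlast P hB hne hx
  obtain ⟨i, rfl⟩ := Fin.exists_castSucc_eq.mpr hxl
  have : i ∈ dn B := mem_dn.mpr hx
  rw [h] at this
  exact absurd this (Finset.notMem_empty _)

lemma pup_pdown (P : Finpartition (Finset.univ : Finset (Fin (n + 1)))) :
    pup (pdown P) (dn (P.part (Fin.last n))) (hvalid P) = P := by
  apply fp_ext
  rw [pup_parts]
  have h1 : insert (Fin.last n) (up (dn (P.part (Fin.last n)))) = P.part (Fin.last n) := by
    rw [up_dn, Finset.insert_erase (P.mem_part (Finset.mem_univ _))]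
  rw [h1]
  ext B
  rw [Finset.mem_insert, Finset.mem_image]
  constructor
  · rintro (rfl | ⟨t, ht, rfl⟩)
    · exact P.part_mem.2 (Finset.mem_univ _)
    · rw [Finset.mem_erase, pdown_parts, Finset.mem_erase, Finset.mem_image] at ht
      obtain ⟨htne, ⟨hne, ⟨B₀, hB₀, rfl⟩⟩⟩ := ht
      have hB₀ne : B₀ ≠ P.part (Fin.last n) := fun h => htne (by rw [h])
      rw [up_dn_part P hB₀ hB₀ne]
      exact hB₀
  · intro hB
    by_cases hBlast : B = P.part (Fin.last n)
    · exact Or.inl hBlast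
    · refine Or.inr ⟨dn B, ?_, up_dn_part P hB hBlast⟩
      rw [Finset.mem_erase, pdown_parts, Finset.mem_erase]
      refine ⟨?_, dn_ne_empty_of_ne P hB hBlast, Finset.mem_image_of_mem dn hB⟩
      intro heq
      obtain ⟨i, hi⟩ := Finset.nonempty_iff_ne_empty.mpr (dn_ne_empty_of_ne P hB hBlast)
      have hi2 : i ∈ dn (P.part (Fin.last n)) := heq ▸ hi
      have hdisj := P.disjoint hB (P.part_mem.2 (Finset.mem_univ _)) hBlast
      simp only [Function.onFun, id] at hdisj
      rw [Finset.disjoint_left] at hdisj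
      exact hdisj (mem_dn.mp hi) (mem_dn.mp hi2)

lemma stirling2_card (n j : ℕ) :
    stirling2 n j = ((Finset.univ : Finset (Finpartition (Finset.univ : Finset (Fin n)))).filter
      fun P => P.parts.card = j).card :=
  Fintype.card_subtype _

lemma stirling2_succ_zero (n : ℕ) : stirling2 (n + 1) 0 = 0 := by
  rw [stirling2_card, Finset.card_eq_zero, Finset.filter_eq_empty_iff]
  intro P _
  intro h0
  rw [Finset.card_eq_zero] at h0
  have := P.sup_parts
  rw [h0] at this
  simp only [Finset.sup_empty] at this
  have : (0 : Fin (n + 1)) ∈ (⊥ : Finset (Fin (n + 1))) := this ▸ Finset.mem_univ _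
  exact absurd this (Finset.notMem_empty _)

lemma stirling2_gt (n j : ℕ) (h : n < j) : stirling2 n j = 0 := by
  rw [stirling2_card, Finset.card_eq_zero, Finset.filter_eq_empty_iff]
  intro P _
  intro hc
  have := P.card_parts_le_card
  rw [hc] at this
  simp only [Finset.card_univ, Fintype.card_fin] at this
  omega

lemma stirling2_zero_zero : stirling2 0 0 = 1 := by
  unfold stirling2
  rw [Fintype.card_eq_one_iff]
  have hbot : (⊥ : Finset (Fin 0)) = Finset.univ := by
    apply Finset.eq_univ_of_forall
    intro x
    exact x.elim0
  have hparts : ∀ P : Finpartition (Finset.univ : Finset (Fin 0)), P.parts = ∅ := by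
    intro P
    rw [Finset.eq_empty_iff_forall_notMem]
    intro B hB
    obtain ⟨x, _⟩ := P.nonempty_of_mem_parts hB
    exact x.elim0
  refine ⟨⟨(Finpartition.empty (Finset (Fin 0))).copy hbot, ?_⟩, ?_⟩
  · rw [Finset.card_eq_zero]
    exact hparts _
  · rintro ⟨Q, hQ⟩
    apply Subtype.ext
    apply fp_ext
    rw [hparts, hparts]

set_option maxHeartbeats 1000000 in
theorem stirling2_rec (n j : ℕ) :
    stirling2 (n + 1) (j + 1) = stirling2 n j + (j + 1) * stirling2 n (j + 1) := by
  rw [stirling2_card, stirling2_card, stirling2_card]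
  have hsplit := Finset.card_filter_add_card_filter_not
    (s := (Finset.univ : Finset (Finpartition (Finset.univ : Finset (Fin (n+1))))).filter
      fun P => P.parts.card = j + 1)
    (p := fun P => P.part (Fin.last n) = {Fin.last n})
  rw [← hsplit]
  congr 1
  · -- singleton-block case
    refine Finset.card_bij' (fun P _ => pdown P) (fun P' _ => pup P' ∅ (Or.inl rfl))
      ?_ ?_ ?_ ?_
    · intro P hP
      rw [Finset.mem_filter, Finset.mem_filter] at hP
      obtain ⟨⟨_, hcard⟩, hlast⟩ := hP
      rw [Finset.mem_filter]
      refine ⟨Finset.mem_univ _, ?_⟩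
      have hc := pup_card (pdown P) (dn (P.part (Fin.last n))) (hvalid P)
      rw [pup_pdown P] at hc
      rw [if_pos ((part_last_eq_singleton_iff P).mpr hlast)] at hc
      omega
    · intro P' hP'
      rw [Finset.mem_filter] at hP'
      rw [Finset.mem_filter, Finset.mem_filter]
      refine ⟨⟨Finset.mem_univ _, ?_⟩, ?_⟩
      · simp [pup_card, hP'.2]
      · rw [pup_part_last]
        simp [up]
    · intro P hP
      rw [Finset.mem_filter, Finset.mem_filter] at hP
      rw [pup_congr (pdown P) (Or.inl rfl) (hvalid P)
        ((part_last_eq_singleton_iff P).mpr hP.2).symm]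
      exact pup_pdown P
    · intro P' hP'
      exact pdown_pup P' ∅ (Or.inl rfl)
  · -- last in a bigger block
    have hT : (((Finset.univ : Finset (Finpartition (Finset.univ : Finset (Fin n)))).filter
        fun P' => P'.parts.card = j + 1).sigma fun P' => P'.parts).card
        = (j + 1) * (((Finset.univ : Finset (Finpartition (Finset.univ : Finset (Fin n)))).filter
        fun P' => P'.parts.card = j + 1)).card := by
      rw [Finset.card_sigma]
      rw [Finset.sum_congr rfl (fun P' hP' => (Finset.mem_filter.mp hP').2)]
      rw [Finset.sum_const, smul_eq_mul, mul_comm]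
    rw [← hT]
    refine Finset.card_bij' (fun P _ => ⟨pdown P, dn (P.part (Fin.last n))⟩)
      (fun q hq => pup q.1 q.2 (Or.inr (Finset.mem_sigma.mp hq).2)) ?_ ?_ ?_ ?_
    · intro P hP
      rw [Finset.mem_filter, Finset.mem_filter] at hP
      obtain ⟨⟨_, hcard⟩, hlast⟩ := hP
      have hne : dn (P.part (Fin.last n)) ≠ ∅ :=
        fun h => hlast ((part_last_eq_singleton_iff P).mp h)
      refine Finset.mem_sigma.mpr ⟨Finset.mem_filter.mpr ⟨Finset.mem_univ _, ?_⟩, ?_⟩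
      · show (pdown P).parts.card = j + 1
        have hc := pup_card (pdown P) (dn (P.part (Fin.last n))) (hvalid P)
        rw [pup_pdown P, if_neg hne] at hc
        omega
      · show dn (P.part (Fin.last n)) ∈ (pdown P).parts
        rcases hvalid P with h | h
        · exact absurd h hne
        · exact h
    · intro q hq
      rw [Finset.mem_sigma, Finset.mem_filter] at hq
      obtain ⟨⟨_, hcard⟩, hmem⟩ := hq
      have hCne : q.2 ≠ ∅ :=
        Finset.nonempty_iff_ne_empty.mp (q.1.nonempty_of_mem_parts hmem)
      rw [Finset.mem_filter, Finset.mem_filter]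
      refine ⟨⟨Finset.mem_univ _, ?_⟩, ?_⟩
      · rw [pup_card, if_neg hCne, hcard]
      · rw [pup_part_last]
        intro h
        obtain ⟨i, hi⟩ := Finset.nonempty_iff_ne_empty.mpr hCne
        have : (i.castSucc : Fin (n+1)) ∈ insert (Fin.last n) (up q.2) :=
          Finset.mem_insert_of_mem (castSucc_mem_up.mpr hi)
        rw [h, Finset.mem_singleton] at this
        exact absurd this (Fin.castSucc_lt_last i).ne
    · intro P hP
      dsimp only
      have := pup_pdown P
      convert this using 2
    · intro q hq
      rw [Finset.mem_sigma, Finset.mem_filter] at hq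
      obtain ⟨⟨_, hcard⟩, hmem⟩ := hq
      have h1 : pdown (pup q.1 q.2 (Or.inr hmem)) = q.1 := pdown_pup _ _ _
      have h2 : dn ((pup q.1 q.2 (Or.inr hmem)).part (Fin.last n)) = q.2 := by
        rw [pup_part_last, dn_insert_last]
      exact Sigma.ext h1 (heq_of_eq h2)

end Part3

section Part4

-- new material
noncomputable def Q (j : ℕ) : MvPolynomial (Fin 2) ℤ :=
  ∑ σ : Equiv.Perm (Fin j), X 1 ^ cyc σ

lemma cyc_le {j : ℕ} (σ : Perm (Fin j)) : cyc σ ≤ j := by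
  unfold cyc
  have h1 : Multiset.card σ.cycleType ≤ σ.support.card := by
    have h2 : Multiset.card σ.cycleType • 1 ≤ σ.cycleType.sum :=
      Multiset.card_nsmul_le_sum (fun x hx =>
        le_trans (by norm_num) (Equiv.Perm.two_le_of_mem_cycleType hx))
    rw [smul_eq_mul, mul_one] at h2
    rw [← Equiv.Perm.sum_cycleType]
    exact h2
  have h3 : (Finset.univ.filter fun i => σ i = i).card + σ.support.card = j := by
    have h := Finset.card_filter_add_card_filter_not
      (s := (univ : Finset (Fin j))) (p := fun i => σ i = i)
    have hsupp : σ.support = univ.filter (fun i => ¬ σ i = i) := rfl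
    rw [← hsupp, Finset.card_univ, Fintype.card_fin] at h
    exact h
  omega

lemma Q_eq (j : ℕ) :
    Q j = ∑ m ∈ Finset.range (j + 1), (stirling1 j m : MvPolynomial (Fin 2) ℤ) * X 1 ^ m := by
  unfold Q
  rw [← Finset.sum_fiberwise_of_maps_to (g := cyc) (t := Finset.range (j + 1))
    (fun σ _ => Finset.mem_range.mpr (Nat.lt_succ_of_le (cyc_le σ)))]
  apply Finset.sum_congr rfl
  intro m _
  have hcongr : ∀ σ ∈ Finset.univ.filter (fun σ : Perm (Fin j) => cyc σ = m),
      (X 1 : MvPolynomial (Fin 2) ℤ) ^ cyc σ = X 1 ^ m := fun σ hσ => by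
    rw [(Finset.mem_filter.mp hσ).2]
  rw [Finset.sum_congr rfl hcongr, Finset.sum_const, nsmul_eq_mul]
  rfl

lemma perm_fin_zero_eq (σ : Perm (Fin 0)) : σ = 1 := Equiv.ext (fun x => x.elim0)

lemma cyc_one_zero : cyc (1 : Perm (Fin 0)) = 0 := by
  unfold cyc
  simp

lemma exc_one_zero : exc (1 : Perm (Fin 0)) = 0 := by
  unfold exc
  simp

lemma Q_zero : Q 0 = 1 := by
  unfold Q
  have hcongr : ∀ σ ∈ (Finset.univ : Finset (Perm (Fin 0))),
      (X 1 : MvPolynomial (Fin 2) ℤ) ^ cyc σ = 1 := fun σ _ => by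
    rw [perm_fin_zero_eq σ, cyc_one_zero, pow_zero]
  rw [Finset.sum_congr rfl hcongr, Finset.sum_const, Finset.card_univ]
  simp

lemma SV_zero : SV 0 = 1 := by
  unfold SV
  have hcongr : ∀ σ ∈ (Finset.univ : Finset (Perm (Fin 0))),
      (X 0 : MvPolynomial (Fin 2) ℤ) ^ exc σ * X 1 ^ cyc σ = 1 := fun σ _ => by
    rw [perm_fin_zero_eq σ, cyc_one_zero, exc_one_zero, pow_zero, pow_zero, one_mul]
  rw [Finset.sum_congr rfl hcongr, Finset.sum_const, Finset.card_univ]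
  simp

lemma Q_succ (j : ℕ) : Q (j + 1) = (X 1 + (j : MvPolynomial (Fin 2) ℤ)) * Q j := by
  have h := congrArg (aeval ![(1 : MvPolynomial (Fin 2) ℤ), X 1]) (SV_rec j)
  have hSV : ∀ m : ℕ, aeval ![(1 : MvPolynomial (Fin 2) ℤ), X 1] (SV m) = Q m := by
    intro m
    unfold SV Q
    rw [map_sum]
    apply Finset.sum_congr rfl
    intro σ _
    rw [map_mul, map_pow, map_pow, aeval_X, aeval_X]
    simp
  rw [hSV] at h
  rw [map_add, map_add, map_mul, map_mul, map_sub, map_pow, aeval_X, aeval_X] at h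
  simp only [Matrix.cons_val_zero, Matrix.cons_val_one, Matrix.head_cons] at h
  rw [hSV] at h
  rw [map_nsmul, map_mul, aeval_X] at h
  simp only [Matrix.cons_val_zero] at h
  rw [hSV] at h
  rw [h]
  rw [one_pow, sub_self, zero_mul, add_zero, one_mul]
  rw [nsmul_eq_mul]
  ring

noncomputable def T (n : ℕ) : MvPolynomial (Fin 2) ℤ :=
  ∑ j ∈ Finset.range (n + 1),
    (stirling2 n j : MvPolynomial (Fin 2) ℤ) * (X 0 - 1) ^ (n - j) * Q j

lemma pderiv_Q (j : ℕ) : pderiv (0 : Fin 2) (Q j) = 0 := by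
  unfold Q
  rw [map_sum]
  apply Finset.sum_eq_zero
  intro σ _
  rw [pderiv_pow, pderiv_X_of_ne (by decide), mul_zero]

lemma pderiv_T (n : ℕ) : pderiv (0 : Fin 2) (T n) =
    ∑ j ∈ Finset.range (n + 1),
      (stirling2 n j : MvPolynomial (Fin 2) ℤ) *
        (((n - j : ℕ) : MvPolynomial (Fin 2) ℤ) * (X 0 - 1) ^ (n - j - 1)) * Q j := by
  unfold T
  rw [map_sum]
  apply Finset.sum_congr rfl
  intro j _
  rw [pderiv_mul, pderiv_Q, mul_zero, add_zero, pderiv_mul]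
  rw [← MvPolynomial.C_eq_coe_nat (stirling2 n j), pderiv_C, zero_mul, zero_add]
  rw [pderiv_pow, map_sub, pderiv_X_self, pderiv_one, sub_zero, mul_one]

lemma step_term {R : Type*} [CommRing R] (x y s q : R) (j k : ℕ) :
    y * (s * (x - 1) ^ k * q) + ((j + k : ℕ) : R) * (x * (s * (x - 1) ^ k * q)) +
      (x - x ^ 2) * (s * (((k : ℕ) : R) * (x - 1) ^ (k - 1)) * q) =
    s * (x - 1) ^ k * ((y + (j : R) * x) * q) := by
  cases k with
  | zero => push_cast; ring
  | succ k => push_cast [Nat.succ_sub_one]; ring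

lemma sum_shift {M : Type*} [AddCommMonoid M] (h : ℕ → M) (n : ℕ) (h0 : h 0 = 0)
    (htop : h (n + 1) = 0) :
    ∑ j ∈ Finset.range (n + 1), h j = ∑ j ∈ Finset.range (n + 1), h (j + 1) := by
  rw [Finset.sum_range_succ' h n, h0, add_zero,
    Finset.sum_range_succ (fun j => h (j + 1)) n, htop, add_zero]

lemma T_succ_eq (n : ℕ) :
    (∑ j ∈ Finset.range (n + 1), (stirling2 n j : MvPolynomial (Fin 2) ℤ) *
      (X 0 - 1) ^ (n - j) * ((X 1 + (j : MvPolynomial (Fin 2) ℤ) * X 0) * Q j))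
      = T (n + 1) := by
  set A : MvPolynomial (Fin 2) ℤ := X 0 - 1 with hA
  set h : ℕ → MvPolynomial (Fin 2) ℤ := fun m =>
    (m : MvPolynomial (Fin 2) ℤ) * (stirling2 n m : MvPolynomial (Fin 2) ℤ) *
      A ^ (n + 1 - m) * Q m with hh
  have hLHS : ∀ j ∈ Finset.range (n + 1),
      (stirling2 n j : MvPolynomial (Fin 2) ℤ) * A ^ (n - j) *
        ((X 1 + (j : MvPolynomial (Fin 2) ℤ) * X 0) * Q j) =
      (stirling2 n j : MvPolynomial (Fin 2) ℤ) * A ^ (n - j) * Q (j + 1) + h j := by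
    intro j hj
    have hle : j ≤ n := Nat.lt_succ_iff.mp (Finset.mem_range.mp hj)
    rw [hh]
    simp only
    rw [Q_succ, show n + 1 - j = (n - j) + 1 from by omega, hA]
    ring
  have hRHS : ∀ j ∈ Finset.range (n + 1),
      (stirling2 (n + 1) (j + 1) : MvPolynomial (Fin 2) ℤ) * A ^ (n + 1 - (j + 1)) * Q (j + 1) =
      (stirling2 n j : MvPolynomial (Fin 2) ℤ) * A ^ (n - j) * Q (j + 1) + h (j + 1) := by
    intro j hj
    rw [hh]
    simp only
    rw [stirling2_rec, Nat.succ_sub_succ]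
    push_cast
    ring
  unfold T
  rw [Finset.sum_range_succ' (fun j => (stirling2 (n+1) j : MvPolynomial (Fin 2) ℤ) *
    (X 0 - 1) ^ (n + 1 - j) * Q j) (n + 1)]
  have hf0 : (stirling2 (n + 1) 0 : MvPolynomial (Fin 2) ℤ) * (X 0 - 1) ^ (n + 1 - 0) * Q 0
      = 0 := by
    rw [stirling2_succ_zero]
    push_cast
    ring
  rw [hf0, add_zero]
  rw [Finset.sum_congr rfl hLHS, Finset.sum_congr rfl (fun j hj => hRHS j hj)]
  rw [Finset.sum_add_distrib, Finset.sum_add_distrib]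
  congr 1
  apply sum_shift
  · rw [hh]; simp
  · rw [hh]
    simp only
    rw [stirling2_gt n (n + 1) (Nat.lt_succ_self n)]
    push_cast
    ring

theorem SV_eq_T (n : ℕ) : SV n = T n := by
  induction n with
  | zero =>
    rw [SV_zero]
    unfold T
    rw [Finset.sum_range_one, Nat.sub_zero, pow_zero, Q_zero, stirling2_zero_zero]
    push_cast
    ring
  | succ n ih =>
    rw [SV_rec, ih, pderiv_T]
    rw [← T_succ_eq]
    unfold T
    simp only [Finset.mul_sum, Finset.smul_sum]
    rw [← Finset.sum_add_distrib, ← Finset.sum_add_distrib]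
    apply Finset.sum_congr rfl
    intro j hj
    have hle : j ≤ n := Nat.lt_succ_iff.mp (Finset.mem_range.mp hj)
    rw [nsmul_eq_mul]
    rw [show ((n : ℕ) : MvPolynomial (Fin 2) ℤ) = ((j + (n - j) : ℕ) : MvPolynomial (Fin 2) ℤ)
      from by rw [Nat.add_sub_cancel' hle]]
    exact step_term (X 0) (X 1) _ (Q j) j (n - j)

theorem stmt5 (n : ℕ) :
    SV n = ∑ j ∈ Finset.range (n + 1), ∑ m ∈ Finset.range (j + 1),
      (stirling2 n j : MvPolynomial (Fin 2) ℤ) * (MvPolynomial.X 0 - 1) ^ (n - j) *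
        (stirling1 j m : MvPolynomial (Fin 2) ℤ) * MvPolynomial.X 1 ^ m := by
  rw [SV_eq_T]
  unfold T
  apply Finset.sum_congr rfl
  intro j _
  rw [Q_eq, Finset.mul_sum]
  apply Finset.sum_congr rfl
  intro m _
  ring

end Part4
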